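/- arXiv:2505.18046 — 2 statements merged into one kernel-verified Lean document; each statement's English description precedes it below -/
import Mathlib

section
/- Let η₁ : ℝ^k → ℝ and η₂ : ℝ^{k×k} → ℝ be continuously differentiable, α = n/d, and X ∈ ℝ^{n×d} with rows x_μ. Suppose Ŵ ∈ ℝ^{d×k}, Û ∈ ℝ^{n×k}, Y ∈ ℝ^{n×k}, Z ∈ ℝ^{d×k} and B, C, Q̂ ∈ ℝ^{k×k} satisfy the AMP-RBM fixed-point equations: (i) Y = (1/√n) X Ŵ − Û B^⊤; (ii) Z = (1/√n) X^⊤ Û − Ŵ C^⊤; (iii) (C + Q̂) Ŵ^⊤ + Z^⊤ = 0; (iv) for every μ = 1,…,n, α^{−1} ∇η₁(B û_μ + y_μ) + û_μ = 0, where û_μ, y_μ ∈ ℝ^k are the μ-th rows of Û, Y written as column vectors; (v) Q̂ = ∇η₂(Ŵ^⊤Ŵ/d). Then Ŵ is a stationary point of the effective objective, i.e. Σ_{μ=1}^n (1/√n) x_μ (∇η₁(Ŵ^⊤x_μ/√n))^⊤ − α Ŵ (∇η₂(Ŵ^⊤Ŵ/d))^⊤ = 0 as a d×k matrix. -/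
open Matrix

noncomputable section

/-- Fixed points of AMP-RBM are stationary points of the effective RBM
objective.  Let `η₁ : ℝ^k → ℝ` and `η₂ : ℝ^{k×k} → ℝ` be continuously differentiable with
gradients `Dη₁`, `Dη₂`.  If `Ŵ, Û, Y, Z, B, C, Q̂` satisfy the AMP-RBM fixed-point
equations (i)–(v), then
`Σ_μ (1/√n) x_μ (∇η₁(Ŵᵀx_μ/√n))ᵀ − α Ŵ (∇η₂(ŴᵀŴ/d))ᵀ = 0`, with `α = n/d`. -/
theorem stmt_4 (k n d : ℕ) (hn : 0 < n) (hd : 0 < d)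
    (η₁ : (Fin k → ℝ) → ℝ) (Dη₁ : (Fin k → ℝ) → (Fin k → ℝ))
    (η₂ : Matrix (Fin k) (Fin k) ℝ → ℝ)
    (Dη₂ : Matrix (Fin k) (Fin k) ℝ → Matrix (Fin k) (Fin k) ℝ)
    (hη₁ : ∀ x v : Fin k → ℝ,
      HasDerivAt (fun s : ℝ => η₁ (x + s • v)) (Dη₁ x ⬝ᵥ v) 0)
    (hη₁c : Continuous Dη₁)
    (hη₂ : ∀ Q V : Matrix (Fin k) (Fin k) ℝ,
      HasDerivAt (fun s : ℝ => η₂ (Q + s • V)) (∑ i, ∑ j, Dη₂ Q i j * V i j) 0)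
    (hη₂c : Continuous Dη₂)
    (α : ℝ) (hα : α = (n : ℝ) / d)
    (X : Matrix (Fin n) (Fin d) ℝ)
    (What : Matrix (Fin d) (Fin k) ℝ) (Uhat : Matrix (Fin n) (Fin k) ℝ)
    (Y : Matrix (Fin n) (Fin k) ℝ) (Z : Matrix (Fin d) (Fin k) ℝ)
    (B C Qh : Matrix (Fin k) (Fin k) ℝ)
    -- (i)
    (hY : Y = (Real.sqrt n)⁻¹ • (X * What) - Uhat * Bᵀ)
    -- (ii)
    (hZ : Z = (Real.sqrt n)⁻¹ • (Xᵀ * Uhat) - What * Cᵀ)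
    -- (iii)
    (hW : (C + Qh) * Whatᵀ + Zᵀ = 0)
    -- (iv)
    (hU : ∀ μ : Fin n, α⁻¹ • Dη₁ (B.mulVec (Uhat μ) + Y μ) + Uhat μ = 0)
    -- (v)
    (hQ : Qh = Dη₂ ((d : ℝ)⁻¹ • (Whatᵀ * What))) :
    (∑ μ : Fin n, (Real.sqrt n)⁻¹ •
        Matrix.vecMulVec (X μ) (Dη₁ ((Real.sqrt n)⁻¹ • Whatᵀ.mulVec (X μ)))) -
      α • (What * (Dη₂ ((d : ℝ)⁻¹ • (Whatᵀ * What)))ᵀ) = 0 := by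
  have hα0 : α ≠ 0 := by
    rw [hα]
    positivity
  -- key: gradient of η₁ at the effective argument equals -α • row of Uhat
  have key : ∀ μ : Fin n,
      Dη₁ ((Real.sqrt n)⁻¹ • Whatᵀ.mulVec (X μ)) = (-α) • Uhat μ := by
    intro μ
    have harg : (Real.sqrt n)⁻¹ • Whatᵀ.mulVec (X μ) = B.mulVec (Uhat μ) + Y μ := by
      rw [hY]
      ext j
      simp [Matrix.mulVec, Matrix.mul_apply, dotProduct, Matrix.sub_apply,
        Matrix.smul_apply, Finset.mul_sum, mul_comm]
    rw [harg]
    have h := hU μ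
    have h2 : α⁻¹ • Dη₁ (B.mulVec (Uhat μ) + Y μ) = -(Uhat μ) :=
      eq_neg_of_add_eq_zero_left h
    calc Dη₁ (B.mulVec (Uhat μ) + Y μ)
        = α • (α⁻¹ • Dη₁ (B.mulVec (Uhat μ) + Y μ)) := by
          rw [smul_smul, mul_inv_cancel₀ hα0, one_smul]
      _ = α • (-(Uhat μ)) := by rw [h2]
      _ = (-α) • Uhat μ := by rw [neg_smul, smul_neg]
  -- from (iii): Z = -(What * Cᵀ) - What * Qhᵀ
  have hZ' : Z = -(What * Cᵀ) - What * Qhᵀ := by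
    have h1 : Zᵀ = -((C + Qh) * Whatᵀ) := eq_neg_of_add_eq_zero_right hW
    have h2 := congrArg Matrix.transpose h1
    rw [Matrix.transpose_transpose] at h2
    rw [h2]
    rw [Matrix.transpose_neg, Matrix.transpose_mul, Matrix.transpose_transpose,
      Matrix.transpose_add, Matrix.mul_add]
    abel
  -- hence (1/√n) Xᵀ Uhat = -(What * Qhᵀ)
  have hXU : (Real.sqrt n)⁻¹ • (Xᵀ * Uhat) = -(What * Qhᵀ) := by
    have : (Real.sqrt n)⁻¹ • (Xᵀ * Uhat) = Z + What * Cᵀ := by rw [hZ]; abel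
    rw [this, hZ']
    abel
  ext i j
  simp only [Matrix.sub_apply, Matrix.sum_apply, Matrix.smul_apply,
    Matrix.vecMulVec_apply, Matrix.zero_apply, key, Pi.smul_apply, smul_eq_mul]
  have hXUij := congrFun (congrFun hXU i) j
  simp only [Matrix.smul_apply, Matrix.mul_apply, Matrix.neg_apply,
    Matrix.transpose_apply, smul_eq_mul] at hXUij
  rw [← hQ]
  have : ∑ μ : Fin n, (Real.sqrt ↑n)⁻¹ * (X μ i * (-α * Uhat μ j))
      = -α * ((Real.sqrt ↑n)⁻¹ * ∑ μ : Fin n, X μ i * Uhat μ j) := by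
    rw [Finset.mul_sum, Finset.mul_sum]
    apply Finset.sum_congr rfl
    intro μ _
    simp [Matrix.transpose_apply]
    ring
  rw [this, hXUij]
  simp only [Matrix.mul_apply, Matrix.transpose_apply]
  ring
end
end

section
/- Let μ be a probability measure on ℝ with bounded support, symmetric (invariant under h ↦ −h), and with ∫ h² dμ(h) > 0. For any a, c ∈ ℝ and q ∈ ℝ, define R(q) = ( ∫∫ h₁ h₂ e^{a h₁²/2 + q h₁ h₂ + c h₂²/2} dμ(h₁) dμ(h₂) ) / ( ∫∫ e^{a h₁²/2 + q h₁ h₂ + c h₂²/2} dμ(h₁) dμ(h₂) ). Then R(q) > 0 if q > 0, R(q) < 0 if q < 0, and R(0) = 0. -/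
open MeasureTheory

noncomputable section

namespace Stmt18Aux

lemma sign_nonneg {q x A : ℝ} (hq : 0 < q) :
    0 ≤ x * (Real.exp (A + q * x) - Real.exp (A - q * x)) := by
  rcases le_or_gt 0 x with hx | hx
  · refine mul_nonneg hx (sub_nonneg.mpr (Real.exp_le_exp.mpr (by nlinarith)))
  · have h := Real.exp_le_exp.mpr (show A + q * x ≤ A - q * x by nlinarith)
    nlinarith

lemma sign_pos {q x A : ℝ} (hq : 0 < q) (hx : x ≠ 0) :
    0 < x * (Real.exp (A + q * x) - Real.exp (A - q * x)) := by
  rcases lt_or_gt_of_ne hx with hx | hx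
  · exact mul_pos_of_neg_of_neg hx (sub_neg.mpr (Real.exp_lt_exp.mpr (by nlinarith)))
  · exact mul_pos hx (sub_pos.mpr (Real.exp_lt_exp.mpr (by nlinarith)))

def Ef (a c q : ℝ) (p : ℝ × ℝ) : ℝ :=
  Real.exp (a * p.1 ^ 2 / 2 + q * p.1 * p.2 + c * p.2 ^ 2 / 2)

def Gf (a c q : ℝ) (p : ℝ × ℝ) : ℝ := p.1 * p.2 * Ef a c q p

lemma contE (a c q : ℝ) : Continuous (Ef a c q) := by unfold Ef; fun_prop

lemma contG (a c q : ℝ) : Continuous (Gf a c q) := by unfold Gf Ef; fun_prop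

lemma aebound (μ : Measure ℝ) [IsProbabilityMeasure μ] (hbdd : ∃ M : ℝ, ∀ᵐ h ∂μ, |h| ≤ M) :
    ∃ M : ℝ, 0 ≤ M ∧ ∀ᵐ p ∂(μ.prod μ), |p.1| ≤ M ∧ |p.2| ≤ M := by
  obtain ⟨M, hM⟩ := hbdd
  refine ⟨|M|, abs_nonneg M, ?_⟩
  have hM' : ∀ᵐ h ∂μ, |h| ≤ |M| := hM.mono fun h hh => hh.trans (le_abs_self M)
  have h1 : MeasurableSet {z : ℝ × ℝ | |z.1| ≤ |M|} :=
    measurableSet_le measurable_fst.abs measurable_const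
  have h2 : MeasurableSet {z : ℝ × ℝ | |z.2| ≤ |M|} :=
    measurableSet_le measurable_snd.abs measurable_const
  have hms : MeasurableSet {z : ℝ × ℝ | |z.1| ≤ |M| ∧ |z.2| ≤ |M|} := h1.inter h2
  rw [Measure.ae_prod_iff_ae_ae hms]
  exact hM'.mono fun x hx => hM'.mono fun y hy => ⟨hx, hy⟩

lemma expbound (a c q M : ℝ) (p : ℝ × ℝ) (h1 : |p.1| ≤ M) (h2 : |p.2| ≤ M) :
    a * p.1 ^ 2 / 2 + q * p.1 * p.2 + c * p.2 ^ 2 / 2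
      ≤ |a| * M ^ 2 / 2 + |q| * M ^ 2 + |c| * M ^ 2 / 2 := by
  have hM : 0 ≤ M := (abs_nonneg p.1).trans h1
  have e1 : a * p.1 ^ 2 ≤ |a| * M ^ 2 := by
    calc a * p.1 ^ 2 ≤ |a * p.1 ^ 2| := le_abs_self _
      _ = |a| * |p.1| ^ 2 := by rw [abs_mul, abs_pow]
      _ ≤ |a| * M ^ 2 := by
          exact mul_le_mul_of_nonneg_left (pow_le_pow_left₀ (abs_nonneg _) h1 2) (abs_nonneg a)
  have e3 : c * p.2 ^ 2 ≤ |c| * M ^ 2 := by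
    calc c * p.2 ^ 2 ≤ |c * p.2 ^ 2| := le_abs_self _
      _ = |c| * |p.2| ^ 2 := by rw [abs_mul, abs_pow]
      _ ≤ |c| * M ^ 2 := by
          exact mul_le_mul_of_nonneg_left (pow_le_pow_left₀ (abs_nonneg _) h2 2) (abs_nonneg c)
  have e2 : q * p.1 * p.2 ≤ |q| * M ^ 2 := by
    calc q * p.1 * p.2 ≤ |q * p.1 * p.2| := le_abs_self _
      _ = |q| * (|p.1| * |p.2|) := by rw [abs_mul, abs_mul, mul_assoc]
      _ ≤ |q| * (M * M) :=
          mul_le_mul_of_nonneg_left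
            (mul_le_mul h1 h2 (abs_nonneg _) hM) (abs_nonneg q)
      _ = |q| * M ^ 2 := by ring
  linarith

lemma intE (μ : Measure ℝ) [IsProbabilityMeasure μ] (hbdd : ∃ M : ℝ, ∀ᵐ h ∂μ, |h| ≤ M)
    (a c q : ℝ) : Integrable (Ef a c q) (μ.prod μ) := by
  obtain ⟨M, hM0, hM⟩ := aebound μ hbdd
  refine Integrable.mono' (integrable_const
    (Real.exp (|a| * M ^ 2 / 2 + |q| * M ^ 2 + |c| * M ^ 2 / 2)))
    (contE a c q).aestronglyMeasurable ?_
  filter_upwards [hM] with p hp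
  rw [Real.norm_eq_abs, abs_of_pos (show (0:ℝ) < Ef a c q p from Real.exp_pos _)]
  exact Real.exp_le_exp.mpr (expbound a c q M p hp.1 hp.2)

lemma intG (μ : Measure ℝ) [IsProbabilityMeasure μ] (hbdd : ∃ M : ℝ, ∀ᵐ h ∂μ, |h| ≤ M)
    (a c q : ℝ) : Integrable (Gf a c q) (μ.prod μ) := by
  obtain ⟨M, hM0, hM⟩ := aebound μ hbdd
  refine Integrable.mono' (integrable_const
    (M * M * Real.exp (|a| * M ^ 2 / 2 + |q| * M ^ 2 + |c| * M ^ 2 / 2)))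
    (contG a c q).aestronglyMeasurable ?_
  filter_upwards [hM] with p hp
  rw [Real.norm_eq_abs, Gf, abs_mul, abs_mul,
    abs_of_pos (show (0:ℝ) < Ef a c q p from Real.exp_pos _)]
  exact mul_le_mul (mul_le_mul hp.1 hp.2 (abs_nonneg _) hM0)
    (Real.exp_le_exp.mpr (expbound a c q M p hp.1 hp.2)) (Real.exp_pos _).le
    (mul_nonneg hM0 hM0)

/-- the product measure is invariant under negating the first coordinate -/
lemma prodsym (μ : Measure ℝ) [IsProbabilityMeasure μ]
    (hsym : μ.map (fun h => -h) = μ) :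
    (μ.prod μ).map (Prod.map (fun h : ℝ => -h) id) = μ.prod μ := by
  rw [← Measure.map_prod_map μ μ measurable_neg measurable_id, hsym, Measure.map_id]

lemma Nsym (μ : Measure ℝ) [IsProbabilityMeasure μ]
    (hsym : μ.map (fun h => -h) = μ) (a c q : ℝ) :
    ∫ p, Gf a c q p ∂(μ.prod μ) = - ∫ p, Gf a c (-q) p ∂(μ.prod μ) := by
  conv_lhs => rw [← prodsym μ hsym]
  rw [integral_map (by fun_prop) (contG a c q).aestronglyMeasurable]
  rw [← integral_neg]
  congr 1
  ext p
  show Gf a c q (-p.1, p.2) = -(Gf a c (-q) p)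
  unfold Gf Ef
  have h1 : a * (-p.1) ^ 2 / 2 + q * (-p.1) * p.2 + c * p.2 ^ 2 / 2
      = a * p.1 ^ 2 / 2 + (-q) * p.1 * p.2 + c * p.2 ^ 2 / 2 := by ring
  rw [h1]; ring

lemma Dsym (μ : Measure ℝ) [IsProbabilityMeasure μ]
    (hsym : μ.map (fun h => -h) = μ) (a c q : ℝ) :
    ∫ p, Ef a c q p ∂(μ.prod μ) = ∫ p, Ef a c (-q) p ∂(μ.prod μ) := by
  conv_lhs => rw [← prodsym μ hsym]
  rw [integral_map (by fun_prop) (contE a c q).aestronglyMeasurable]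
  congr 1
  ext p
  show Ef a c q (-p.1, p.2) = Ef a c (-q) p
  unfold Ef
  congr 1
  ring

lemma Dpos (μ : Measure ℝ) [IsProbabilityMeasure μ] (hbdd : ∃ M : ℝ, ∀ᵐ h ∂μ, |h| ≤ M)
    (a c q : ℝ) : 0 < ∫ p, Ef a c q p ∂(μ.prod μ) := by
  rw [integral_pos_iff_support_of_nonneg_ae (f := Ef a c q)
    (Filter.Eventually.of_forall fun p => (Real.exp_pos _).le) (intE μ hbdd a c q)]
  have : Function.support (Ef a c q) = Set.univ :=
    Set.eq_univ_iff_forall.mpr fun p => (Real.exp_pos _).ne'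
  rw [this]
  simp

lemma nonzero_pos (μ : Measure ℝ) [IsProbabilityMeasure μ]
    (hvar : 0 < ∫ h, h ^ 2 ∂μ) : 0 < μ {h : ℝ | h ≠ 0} := by
  by_contra h
  rw [not_lt, le_zero_iff] at h
  have hz : ∀ᵐ x ∂μ, x = (0 : ℝ) := by
    rw [ae_iff]; simpa using h
  have : ∫ h, h ^ 2 ∂μ = 0 := by
    rw [integral_congr_ae (g := fun _ => (0 : ℝ)) (hz.mono fun x hx => by simp [hx])]
    simp
  linarith

lemma Npos (μ : Measure ℝ) [IsProbabilityMeasure μ] (hbdd : ∃ M : ℝ, ∀ᵐ h ∂μ, |h| ≤ M)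
    (hsym : μ.map (fun h => -h) = μ) (hvar : 0 < ∫ h, h ^ 2 ∂μ) (a c q : ℝ) (hq : 0 < q) :
    0 < ∫ p, Gf a c q p ∂(μ.prod μ) := by
  have key : ∀ p : ℝ × ℝ, Gf a c q p - Gf a c (-q) p
      = (p.1 * p.2) * (Real.exp ((a * p.1 ^ 2 / 2 + c * p.2 ^ 2 / 2) + q * (p.1 * p.2))
        - Real.exp ((a * p.1 ^ 2 / 2 + c * p.2 ^ 2 / 2) - q * (p.1 * p.2))) := by
    intro p
    unfold Gf Ef
    have h1 : a * p.1 ^ 2 / 2 + q * p.1 * p.2 + c * p.2 ^ 2 / 2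
        = (a * p.1 ^ 2 / 2 + c * p.2 ^ 2 / 2) + q * (p.1 * p.2) := by ring
    have h2 : a * p.1 ^ 2 / 2 + (-q) * p.1 * p.2 + c * p.2 ^ 2 / 2
        = (a * p.1 ^ 2 / 2 + c * p.2 ^ 2 / 2) - q * (p.1 * p.2) := by ring
    rw [h1, h2]; ring
  have hsub : 0 < ∫ p, (Gf a c q p - Gf a c (-q) p) ∂(μ.prod μ) := by
    rw [integral_pos_iff_support_of_nonneg_ae (f := fun p => Gf a c q p - Gf a c (-q) p)
      (Filter.Eventually.of_forall fun p => by
        simp only [Pi.zero_apply]; rw [key p]; exact sign_nonneg hq)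
      ((intG μ hbdd a c q).sub (intG μ hbdd a c (-q)))]
    have hsubset : {h : ℝ | h ≠ 0} ×ˢ {h : ℝ | h ≠ 0}
        ⊆ Function.support (fun p => Gf a c q p - Gf a c (-q) p) := by
      rintro ⟨x, y⟩ ⟨hx, hy⟩
      have : (x, y).1 * (x, y).2 ≠ 0 := mul_ne_zero hx hy
      simp only [Function.mem_support, key]
      exact (sign_pos hq this).ne'
    refine lt_of_lt_of_le ?_ (measure_mono hsubset)
    rw [Measure.prod_prod]
    exact ENNReal.mul_pos (nonzero_pos μ hvar).ne' (nonzero_pos μ hvar).ne'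
  rw [integral_sub (intG μ hbdd a c q) (intG μ hbdd a c (-q)), Nsym μ hsym a c (-q),
    neg_neg, sub_neg_eq_add] at hsub
  linarith

end Stmt18Aux

open Stmt18Aux in
/-- Sign property of the off-diagonal entries of `∇η₂` for an RBM with a
separable symmetric hidden-unit prior.  Let `μ` be a probability measure on `ℝ` with
bounded support, symmetric under `h ↦ -h`, and with `∫ h² dμ > 0`.  For `a, c, q ∈ ℝ` let
`R(q)` be the ratio of `∫∫ h₁h₂ e^{a h₁²/2 + q h₁h₂ + c h₂²/2}` to
`∫∫ e^{a h₁²/2 + q h₁h₂ + c h₂²/2}`.  Then `R(q) > 0` for `q > 0`, `R(q) < 0` for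
`q < 0`, and `R(0) = 0`. -/
theorem stmt_18 (μ : Measure ℝ) [IsProbabilityMeasure μ]
    (hbdd : ∃ M : ℝ, ∀ᵐ h ∂μ, |h| ≤ M)
    (hsym : μ.map (fun h => -h) = μ)
    (hvar : 0 < ∫ h, h ^ 2 ∂μ)
    (a c : ℝ)
    (R : ℝ → ℝ)
    (hR : ∀ q, R q =
      (∫ h₁, ∫ h₂, h₁ * h₂ * Real.exp (a * h₁ ^ 2 / 2 + q * h₁ * h₂ + c * h₂ ^ 2 / 2) ∂μ ∂μ) /
      (∫ h₁, ∫ h₂, Real.exp (a * h₁ ^ 2 / 2 + q * h₁ * h₂ + c * h₂ ^ 2 / 2) ∂μ ∂μ)) :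
    ∀ q : ℝ, (0 < q → 0 < R q) ∧ (q < 0 → R q < 0) ∧ (q = 0 → R q = 0) := by
  have hRq : ∀ q, R q = (∫ p, Gf a c q p ∂(μ.prod μ)) / (∫ p, Ef a c q p ∂(μ.prod μ)) := by
    intro q
    rw [hR q, MeasureTheory.integral_prod _ (intG μ hbdd a c q),
      MeasureTheory.integral_prod _ (intE μ hbdd a c q)]
    rfl
  intro q
  refine ⟨fun hq => ?_, fun hq => ?_, fun hq => ?_⟩
  · rw [hRq q]
    exact div_pos (Npos μ hbdd hsym hvar a c q hq) (Dpos μ hbdd a c q)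
  · rw [hRq q]
    refine div_neg_of_neg_of_pos ?_ (Dpos μ hbdd a c q)
    rw [Nsym μ hsym a c q, neg_neg_iff_pos]
    exact Npos μ hbdd hsym hvar a c (-q) (by linarith)
  · subst hq
    rw [hRq 0]
    have h0 : ∫ p, Gf a c 0 p ∂(μ.prod μ) = - ∫ p, Gf a c (-0) p ∂(μ.prod μ) :=
      Nsym μ hsym a c 0
    rw [neg_zero] at h0
    have : ∫ p, Gf a c 0 p ∂(μ.prod μ) = 0 := by linarith
    rw [this, zero_div]
end
end
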